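/- The unstable Lyapunov exponent of the 1-periodic orbit through p_ℓ converges to a positive limit: as ℓ → ∞, log|μ_u(ℓ)| / (2πℓ) → 1/K. -/

import Mathlib

/-!
With `s = e^{2πℓ/K} = 1/y_ℓ`, the trace and determinant scale as `t_ℓ = s τ_ℓ` and
`d_ℓ = s² (d_ℓ y_ℓ²)`, where `τ_ℓ → -Kλ` and `d_ℓ y_ℓ² → 0` because `δ > 1`. Hence
`μ_u(ℓ) = s r_ℓ` with `r_ℓ` the corresponding root of `X² - τ_ℓ X + d_ℓ y_ℓ²`, and `r_ℓ → -Kλ ≠ 0`.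
So `log |μ_u(ℓ)| = 2πℓ/K + O(1)`.
-/

open Filter Topology Matrix

/-- `y_ℓ = exp(−2πℓ/K)`, the `y`-coordinate of the fixed point `p_ℓ`. -/
noncomputable def yFix (K : ℝ) (ℓ : ℕ) : ℝ :=
  Real.exp (-(2 * Real.pi * (ℓ : ℝ)) / K)

/-- `d_ℓ = δ·exp(−2π(δ−1)ℓ/K)`, the determinant of the derivative at `p_ℓ`. -/
noncomputable def detFix (K δ : ℝ) (ℓ : ℕ) : ℝ :=
  δ * Real.exp (-(2 * Real.pi * (δ - 1) * (ℓ : ℝ)) / K)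

/-- `t_ℓ`, the trace of the derivative at `p_ℓ`. -/
noncomputable def traceFix (K δ lam : ℝ) (ℓ : ℕ) : ℝ :=
  1 + δ * Real.exp (-(2 * Real.pi * (δ - 1) * (ℓ : ℝ)) / K)
    - K * Real.exp (2 * Real.pi * (ℓ : ℝ) / K) *
      Real.sqrt (lam ^ 2 - (yFix K ℓ - yFix K ℓ ^ δ) ^ 2)

/-- `μ_s(ℓ)`, the stable eigenvalue at `p_ℓ`. -/
noncomputable def muS (K δ lam : ℝ) (ℓ : ℕ) : ℝ :=
  (traceFix K δ lam ℓ + Real.sqrt (traceFix K δ lam ℓ ^ 2 - 4 * detFix K δ ℓ)) / 2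

/-- `μ_u(ℓ)`, the unstable eigenvalue at `p_ℓ`. -/
noncomputable def muU (K δ lam : ℝ) (ℓ : ℕ) : ℝ :=
  (traceFix K δ lam ℓ - Real.sqrt (traceFix K δ lam ℓ ^ 2 - 4 * detFix K δ ℓ)) / 2

/-- `c_ℓ = cos x_ℓ`. -/
noncomputable def cosFix (K δ lam : ℝ) (ℓ : ℕ) : ℝ :=
  Real.sqrt (1 - ((yFix K ℓ - yFix K ℓ ^ δ) / lam) ^ 2)

/-- `M_ℓ`, the derivative of the model first-return map at the fixed point `p_ℓ`. -/
noncomputable def derivFix (K δ lam : ℝ) (ℓ : ℕ) : Matrix (Fin 2) (Fin 2) ℝ :=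
  !![1, -K / yFix K ℓ;
     lam * cosFix K δ lam ℓ,
       δ * yFix K ℓ ^ (δ - 1) - (lam * K / yFix K ℓ) * cosFix K δ lam ℓ]

noncomputable def lowerRoot (t d : ℝ) : ℝ :=
  (t - Real.sqrt (t ^ 2 - 4 * d)) / 2

lemma lowerRoot_mul {s : ℝ} (hs : 0 ≤ s) (t d : ℝ) :
    lowerRoot (s * t) (s ^ 2 * d) = s * lowerRoot t d := by
  have hdisc : (s * t) ^ 2 - 4 * (s ^ 2 * d) = s ^ 2 * (t ^ 2 - 4 * d) := by ring
  rw [lowerRoot, lowerRoot, hdisc, Real.sqrt_mul (sq_nonneg s), Real.sqrt_sq hs]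
  ring

lemma lowerRoot_neg_zero {a : ℝ} (ha : 0 ≤ a) : lowerRoot (-a) 0 = -a := by
  rw [lowerRoot, neg_sq, mul_zero, sub_zero, Real.sqrt_sq ha]
  ring

lemma Filter.Tendsto.lowerRoot {α : Type*} {l : Filter α} {t d : α → ℝ} {t₀ d₀ : ℝ}
    (ht : Tendsto t l (𝓝 t₀)) (hd : Tendsto d l (𝓝 d₀)) :
    Tendsto (fun n => lowerRoot (t n) (d n)) l (𝓝 (lowerRoot t₀ d₀)) :=
  (ht.sub ((ht.pow 2).sub (hd.const_mul 4)).sqrt).div_const 2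

lemma tendsto_log_abs_exp_mul_div {α : Type*} {l : Filter α} {x v : α → ℝ} {c v₀ : ℝ}
    (hx : Tendsto x l atTop) (hv : Tendsto v l (𝓝 v₀)) (hv₀ : v₀ ≠ 0) :
    Tendsto (fun n => Real.log |Real.exp (c * x n) * v n| / x n) l (𝓝 c) := by
  have hrem : Tendsto (fun n => Real.log (v n) / x n) l (𝓝 0) := (hv.log hv₀).div_atTop hx
  have hsplit : ∀ᶠ n in l,
      c + Real.log (v n) / x n = Real.log |Real.exp (c * x n) * v n| / x n := by
    filter_upwards [hx.eventually_gt_atTop 0, hv.eventually_ne hv₀] with n hxn hvn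
    rw [Real.log_abs, Real.log_mul (Real.exp_pos _).ne' hvn, Real.log_exp]
    field_simp
  simpa using (hrem.const_add c).congr' hsplit

section FixedPoint

variable {K δ : ℝ}

lemma yFix_eq_inv_exp (K : ℝ) (ℓ : ℕ) :
    yFix K ℓ = (Real.exp (2 * Real.pi * ℓ / K))⁻¹ := by
  rw [yFix, neg_div, Real.exp_neg]

lemma detFix_eq_mul_yFix_rpow (K δ : ℝ) (ℓ : ℕ) :
    detFix K δ ℓ = δ * yFix K ℓ ^ (δ - 1) := by
  rw [detFix, yFix, Real.rpow_def_of_pos (Real.exp_pos _), Real.log_exp]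
  ring_nf

lemma tendsto_yFix (hK : 0 < K) : Tendsto (yFix K) atTop (𝓝 0) := by
  have hexp : Tendsto (fun ℓ : ℕ => Real.exp (2 * Real.pi * ℓ / K)) atTop atTop :=
    Real.tendsto_exp_atTop.comp <|
      (tendsto_natCast_atTop_atTop.const_mul_atTop Real.two_pi_pos).atTop_div_const hK
  exact hexp.inv_tendsto_atTop.congr fun ℓ => (yFix_eq_inv_exp K ℓ).symm

lemma tendsto_yFix_rpow (hK : 0 < K) {p : ℝ} (hp : 0 < p) :
    Tendsto (fun ℓ => yFix K ℓ ^ p) atTop (𝓝 0) := by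
  simpa [Real.zero_rpow hp.ne'] using (tendsto_yFix hK).rpow_const (Or.inr hp.le)

lemma tendsto_detFix (hK : 0 < K) (hδ : 1 < δ) : Tendsto (detFix K δ) atTop (𝓝 0) := by
  simpa [funext (detFix_eq_mul_yFix_rpow K δ)] using
    (tendsto_yFix_rpow hK (sub_pos.2 hδ)).const_mul δ

/-- `t_ℓ / e^{2πℓ/K}`, the trace rescaled by the return time. -/
noncomputable def scaledTraceFix (K δ lam : ℝ) (ℓ : ℕ) : ℝ :=
  (1 + detFix K δ ℓ) * yFix K ℓ - K * Real.sqrt (lam ^ 2 - (yFix K ℓ - yFix K ℓ ^ δ) ^ 2)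

lemma muU_eq_exp_mul_lowerRoot (K δ lam : ℝ) (ℓ : ℕ) :
    muU K δ lam ℓ = Real.exp (2 * Real.pi * ℓ / K) *
      lowerRoot (scaledTraceFix K δ lam ℓ) (detFix K δ ℓ * yFix K ℓ ^ 2) := by
  have hsy : Real.exp (2 * Real.pi * ℓ / K) * yFix K ℓ = 1 := by
    rw [yFix_eq_inv_exp, mul_inv_cancel₀ (Real.exp_pos _).ne']
  have htrace : traceFix K δ lam ℓ =
      Real.exp (2 * Real.pi * ℓ / K) * scaledTraceFix K δ lam ℓ := by
    rw [traceFix, scaledTraceFix, ← detFix]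
    linear_combination (-(1 + detFix K δ ℓ)) * hsy
  have hdet : detFix K δ ℓ =
      Real.exp (2 * Real.pi * ℓ / K) ^ 2 * (detFix K δ ℓ * yFix K ℓ ^ 2) := by
    linear_combination (-(detFix K δ ℓ) * (Real.exp (2 * Real.pi * ℓ / K) * yFix K ℓ + 1)) * hsy
  rw [← lowerRoot_mul (Real.exp_pos _).le, ← htrace, ← hdet]
  rfl

lemma tendsto_scaledTraceFix (hK : 0 < K) (hδ : 1 < δ) {lam : ℝ} (hlam : 0 ≤ lam) :
    Tendsto (scaledTraceFix K δ lam) atTop (𝓝 (-(K * lam))) := by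
  have hy := tendsto_yFix hK
  have hroot : Tendsto (fun ℓ => Real.sqrt (lam ^ 2 - (yFix K ℓ - yFix K ℓ ^ δ) ^ 2))
      atTop (𝓝 lam) := by
    have h := ((tendsto_const_nhds (x := lam ^ 2)).sub
      ((hy.sub (tendsto_yFix_rpow hK (p := δ) (by linarith))).pow 2)).sqrt
    rwa [sub_zero, zero_pow two_ne_zero, sub_zero, Real.sqrt_sq hlam] at h
  have h := (((tendsto_const_nhds (x := (1 : ℝ))).add (tendsto_detFix hK hδ)).mul hy).sub
    (hroot.const_mul K)
  rwa [mul_zero, zero_sub] at h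

end FixedPoint

/-- the unstable Lyapunov exponent converges to `1/K > 0`. -/
theorem unstable_lyapunov_exponent (K δ lam : ℝ) (hK : 0 < K) (hδ : 1 < δ)
    (hlam : 0 < lam) :
    Tendsto (fun ℓ : ℕ => Real.log |muU K δ lam ℓ| / (2 * Real.pi * (ℓ : ℝ)))
      atTop (𝓝 (1 / K)) := by
  have hdet : Tendsto (fun ℓ => detFix K δ ℓ * yFix K ℓ ^ 2) atTop (𝓝 0) := by
    simpa using (tendsto_detFix hK hδ).mul ((tendsto_yFix hK).pow 2)
  have hroot := (tendsto_scaledTraceFix hK hδ hlam.le).lowerRoot hdet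
  rw [lowerRoot_neg_zero (mul_pos hK hlam).le] at hroot
  have hx : Tendsto (fun ℓ : ℕ => 2 * Real.pi * ℓ) atTop atTop :=
    tendsto_natCast_atTop_atTop.const_mul_atTop Real.two_pi_pos
  simpa only [muU_eq_exp_mul_lowerRoot, one_div_mul_eq_div] using
    tendsto_log_abs_exp_mul_div (c := 1 / K) hx hroot (neg_ne_zero.2 (mul_pos hK hlam).ne')
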